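/- The relation C_1^2 C_2^2 = (1−4^4 q)^{−1} for local P^3 (eq. (7.6)): In ℚ[[q]] define I_{10} = 4·Σ_{d≥1} (4d−1)!/(d!)^4 q^d, I_{20} = 4·Σ_{d≥1} (4d−1)!/(d!)^4 (4Har[4d−1] − 4Har[d]) q^d with Har[m] = Σ_{k=1}^{m} 1/k, C_1 = 1 + 𝖣I_{10}, J_{10} = (I_{10} + 𝖣I_{20})/C_1, and C_2 = 1 + 𝖣J_{10}, where 𝖣 = q·d/dq. Then (1 − 256q)·C_1^2·C_2^2 = 1 in ℚ[[q]]. -/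

import Mathlib

/-!
`C₁` is the hypergeometric series `A = Σ (4d)!/(d!)⁴ qᵈ`, a solution of the Picard–Fuchs operator
`L = (1 - 256q)𝖣³ - q(384𝖣² + 176𝖣 + 24)`, and `u = I₁₀ + 𝖣I₂₀ = Σ (4d)!/(d!)⁴ (4Har[4d] - 4Har[d]) qᵈ`
is such that `A log q + u` is a second (Frobenius) solution. Then `C₁²C₂ = A² + A𝖣u - u𝖣A` is the
`𝖣`-Wronskian of these two solutions, so it is killed by the exterior square of `L`. So is `g·A`,
where `g = Σ binom(2d, d) 64ᵈ qᵈ` solves `(1 - 256q)𝖣g = 128qg`. Solutions of this third order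
operator are determined by their constant term, hence `C₁C₂ = g`, and `(1 - 256q)g² = 1`.
-/

noncomputable section

/-- The derivation `𝖣 = q·d/dq` on `ℚ[[q]]`. -/
def Dq (G : PowerSeries ℚ) : PowerSeries ℚ :=
  PowerSeries.mk fun d => (d : ℚ) * PowerSeries.coeff d G

/-- Harmonic number `Har[m] = Σ_{k=1}^m 1/k`. -/
def Har (m : ℕ) : ℚ := ∑ k ∈ Finset.range m, ((k : ℚ) + 1)⁻¹

/-- `I₁₀ = 4·Σ_{d≥1} (4d−1)!/(d!)^4 q^d`. -/
def I₁₀ : PowerSeries ℚ :=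
  PowerSeries.mk fun d => if d = 0 then 0 else
    4 * ((4 * d - 1).factorial : ℚ) / ((d.factorial : ℚ)) ^ 4

/-- `I₂₀ = 4·Σ_{d≥1} (4d−1)!/(d!)^4 (4Har[4d−1] − 4Har[d]) q^d`. -/
def I₂₀ : PowerSeries ℚ :=
  PowerSeries.mk fun d => if d = 0 then 0 else
    4 * ((4 * d - 1).factorial : ℚ) / ((d.factorial : ℚ)) ^ 4
      * (4 * Har (4 * d - 1) - 4 * Har d)

/-- `C₁ = 1 + 𝖣I₁₀`. -/
def C₁ : PowerSeries ℚ := 1 + Dq I₁₀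

/-- `J₁₀ = (I₁₀ + 𝖣I₂₀)/C₁`. -/
def J₁₀ : PowerSeries ℚ := (I₁₀ + Dq I₂₀) * C₁⁻¹

/-- `C₂ = 1 + 𝖣J₁₀`. -/
def C₂ : PowerSeries ℚ := 1 + Dq J₁₀

open PowerSeries

@[simp] theorem PowerSeries.coeff_ofNat_mul {R : Type*} [CommSemiring R] (k n : ℕ) [k.AtLeastTwo]
    (f : R⟦X⟧) : coeff n ((no_index (OfNat.ofNat k : R⟦X⟧)) * f) = OfNat.ofNat k * coeff n f := by
  rw [← map_ofNat C k, coeff_C_mul]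

theorem coeff_Dq (f : ℚ⟦X⟧) (n : ℕ) : coeff n (Dq f) = n * coeff n f :=
  coeff_mk _ _

@[simp] theorem constantCoeff_Dq (f : ℚ⟦X⟧) : constantCoeff (Dq f) = 0 := by
  rw [← coeff_zero_eq_constantCoeff_apply, coeff_Dq, Nat.cast_zero, zero_mul]

theorem Dq_eq_X_mul_derivative (f : ℚ⟦X⟧) : Dq f = X * d⁄dX ℚ f := by
  ext (_ | n)
  · simp [coeff_Dq]
  · rw [coeff_Dq, coeff_succ_X_mul, coeff_derivative]
    push_cast
    ring

theorem Dq_add (f g : ℚ⟦X⟧) : Dq (f + g) = Dq f + Dq g := by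
  simp only [Dq_eq_X_mul_derivative, map_add, mul_add]

theorem Dq_sub (f g : ℚ⟦X⟧) : Dq (f - g) = Dq f - Dq g := by
  simp only [Dq_eq_X_mul_derivative, map_sub, mul_sub]

theorem Dq_mul (f g : ℚ⟦X⟧) : Dq (f * g) = Dq f * g + f * Dq g := by
  simp only [Dq_eq_X_mul_derivative, Derivation.leibniz, smul_eq_mul]
  ring

theorem Dq_inv (f : ℚ⟦X⟧) : Dq f⁻¹ = -f⁻¹ ^ 2 * Dq f := by
  simp only [Dq_eq_X_mul_derivative, derivative_inv']
  ring

theorem Dq_one : Dq (1 : ℚ⟦X⟧) = 0 := by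
  rw [Dq_eq_X_mul_derivative, Derivation.map_one_eq_zero, mul_zero]

theorem Dq_ofNat (k : ℕ) [k.AtLeastTwo] : Dq (no_index (OfNat.ofNat k : ℚ⟦X⟧)) = 0 := by
  rw [Dq_eq_X_mul_derivative, ← Nat.cast_ofNat, Derivation.map_natCast, mul_zero]

theorem Dq_C (a : ℚ) : Dq (C a) = 0 := by
  rw [Dq_eq_X_mul_derivative, derivative_C, mul_zero]

theorem Dq_X : Dq (X : ℚ⟦X⟧) = X := by
  rw [Dq_eq_X_mul_derivative, derivative_X, mul_one]

theorem eq_of_Dq_eq {f g : ℚ⟦X⟧} (hD : Dq f = Dq g) (h₀ : constantCoeff f = constantCoeff g) :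
    f = g := by
  refine derivative.ext (mul_left_cancel₀ X_ne_zero ?_) h₀
  rwa [Dq_eq_X_mul_derivative, Dq_eq_X_mul_derivative] at hD

theorem X_pow_dvd_of_X_pow_dvd_Dq {f : ℚ⟦X⟧} {n : ℕ} (h₀ : constantCoeff f = 0)
    (h : X ^ n ∣ Dq f) : X ^ n ∣ f := by
  rw [X_pow_dvd_iff] at h ⊢
  intro m hm
  rcases m with _ | m
  · rwa [coeff_zero_eq_constantCoeff_apply]
  · have h' := h (m + 1) hm
    rw [coeff_Dq, mul_eq_zero] at h'
    exact h'.resolve_left (Nat.cast_ne_zero.mpr m.succ_ne_zero)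

theorem eq_zero_of_Dq_system {W a b c d v₁ v₂ v₃ : ℚ⟦X⟧} (hW : IsUnit W)
    (h₁ : Dq v₁ = v₂) (h₂ : W * Dq v₂ = v₃ + X * (a * v₁ + b * v₂))
    (h₃ : W * Dq v₃ = X * (c * v₁ + d * v₃)) (h₀ : constantCoeff v₁ = 0) : v₁ = 0 := by
  have h₂₀ : constantCoeff v₂ = 0 := by simp [← h₁]
  have h₃₀ : constantCoeff v₃ = 0 := by simpa using (congrArg constantCoeff h₂).symm
  have key : ∀ n, X ^ n ∣ v₁ ∧ X ^ n ∣ v₂ ∧ X ^ n ∣ v₃ := by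
    intro n
    induction n with
    | zero => simp
    | succ n ih =>
      obtain ⟨d₁, d₂, d₃⟩ := ih
      have e₃ : X ^ (n + 1) ∣ v₃ := by
        refine X_pow_dvd_of_X_pow_dvd_Dq h₃₀ (hW.dvd_mul_left.mp ?_)
        rw [h₃, pow_succ']
        exact mul_dvd_mul_left X (dvd_add (d₁.mul_left c) (d₃.mul_left d))
      have e₂ : X ^ (n + 1) ∣ v₂ := by
        refine X_pow_dvd_of_X_pow_dvd_Dq h₂₀ (hW.dvd_mul_left.mp ?_)
        rw [h₂]
        refine dvd_add e₃ ?_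
        rw [pow_succ']
        exact mul_dvd_mul_left X (dvd_add (d₁.mul_left a) (d₂.mul_left b))
      exact ⟨X_pow_dvd_of_X_pow_dvd_Dq h₀ (h₁ ▸ e₂), e₂, e₃⟩
  ext n
  simpa using X_pow_dvd_iff.mp (key (n + 1)).1 n n.lt_succ_self

def centralBinomSeries (a : ℚ) : ℚ⟦X⟧ :=
  mk fun n => Nat.centralBinom n * a ^ n

theorem one_sub_mul_Dq_centralBinomSeries (a : ℚ) :
    (1 - 4 * C a * X) * Dq (centralBinomSeries a) = 2 * C a * X * centralBinomSeries a := by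
  ext (_ | n)
  · simp
  · have h := Nat.succ_mul_centralBinom_succ n
    simp only [centralBinomSeries, sub_mul, one_mul, map_sub, mul_assoc, coeff_Dq, coeff_mk,
      coeff_ofNat_mul, coeff_C_mul, coeff_succ_X_mul]
    qify at h
    push_cast at h ⊢
    linear_combination a ^ (n + 1) * h

theorem one_sub_mul_centralBinomSeries_sq (a : ℚ) :
    (1 - 4 * C a * X) * centralBinomSeries a ^ 2 = 1 := by
  refine eq_of_Dq_eq ?_ (by simp [centralBinomSeries])
  rw [Dq_one, Dq_mul, Dq_sub, Dq_one, Dq_mul, Dq_mul, Dq_ofNat, Dq_C, Dq_X, pow_two, Dq_mul]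
  linear_combination 2 * centralBinomSeries a * one_sub_mul_Dq_centralBinomSeries a

theorem Har_succ (m : ℕ) : Har (m + 1) = Har m + ((m : ℚ) + 1)⁻¹ :=
  Finset.sum_range_succ _ m

namespace LocalP3

def pfOp (y : ℚ⟦X⟧) : ℚ⟦X⟧ :=
  (1 - 256 * X) * Dq (Dq (Dq y)) - X * (384 * Dq (Dq y) + 176 * Dq y + 24 * y)

theorem coeff_zero_pfOp (y : ℚ⟦X⟧) : coeff 0 (pfOp y) = 0 := by
  simp [pfOp]

theorem coeff_succ_pfOp (y : ℚ⟦X⟧) (n : ℕ) : coeff (n + 1) (pfOp y) =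
    (n + 1) ^ 3 * coeff (n + 1) y - 4 * (4 * n + 1) * (4 * n + 2) * (4 * n + 3) * coeff n y := by
  simp [pfOp, sub_mul, mul_assoc, coeff_Dq, coeff_succ_X_mul]
  ring

def A : ℚ⟦X⟧ := mk fun d => ((4 * d).factorial : ℚ) / (d.factorial : ℚ) ^ 4

theorem coeff_A_succ (n : ℕ) : coeff (n + 1) A =
    4 * (4 * n + 1) * (4 * n + 2) * (4 * n + 3) / (n + 1) ^ 3 * coeff n A := by
  simp only [A, coeff_mk]
  rw [show 4 * (n + 1) = 4 * n + 1 + 1 + 1 + 1 by ring]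
  simp only [Nat.factorial_succ]
  push_cast
  field_simp
  ring

theorem pfOp_A : pfOp A = 0 := by
  ext (_ | n)
  · exact coeff_zero_pfOp A
  · rw [coeff_succ_pfOp, coeff_A_succ, map_zero]
    field_simp
    ring

theorem constantCoeff_A : constantCoeff A = 1 := by
  simp [A]

theorem C₁_eq_A : C₁ = A := by
  ext (_ | n)
  · simp [C₁, A]
  · simp only [C₁, I₁₀, A, map_add, coeff_one, coeff_Dq, coeff_mk, Nat.add_one_ne_zero, if_false]
    rw [show 4 * (n + 1) - 1 = 4 * n + 3 by omega, show 4 * (n + 1) = 4 * n + 3 + 1 by ring,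
      Nat.factorial_succ (4 * n + 3)]
    push_cast
    field_simp
    ring

def u : ℚ⟦X⟧ := I₁₀ + Dq I₂₀

theorem coeff_u (n : ℕ) : coeff n u = coeff n A * (4 * Har (4 * n) - 4 * Har n) := by
  rcases n with _ | n
  · simp [u, I₁₀, I₂₀]
  · simp only [u, I₁₀, I₂₀, A, map_add, coeff_Dq, coeff_mk, Nat.add_one_ne_zero, if_false]
    rw [show 4 * (n + 1) - 1 = 4 * n + 3 by omega, show 4 * (n + 1) = 4 * n + 3 + 1 by ring,
      Nat.factorial_succ (4 * n + 3), Har_succ (4 * n + 3)]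
    push_cast
    field_simp
    ring

theorem C₂_eq : C₂ = 1 + Dq (u * A⁻¹) := by
  rw [C₂, J₁₀, C₁_eq_A, u]

-- Equivalently `pfOp (A log q + u) = 0`, as `𝖣 log q = 1`.
theorem pfOp_u : pfOp u = X * (768 * Dq A + 176 * A) - 3 * (1 - 256 * X) * Dq (Dq A) := by
  ext (_ | n)
  · simp [coeff_zero_pfOp]
  · rw [coeff_succ_pfOp, coeff_u, coeff_u, coeff_A_succ]
    simp only [map_sub, sub_mul, one_mul, mul_assoc, coeff_succ_X_mul, map_add, coeff_ofNat_mul,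
      coeff_Dq, coeff_A_succ]
    rw [show 4 * (n + 1) = 4 * n + 1 + 1 + 1 + 1 by ring]
    simp only [Har_succ]
    push_cast
    field_simp
    ring

-- The `𝖣`-Wronskian of `y₁` and `y₁ log q + y₂`.
def wronskian (y₁ y₂ : ℚ⟦X⟧) : ℚ⟦X⟧ := y₁ ^ 2 + y₁ * Dq y₂ - y₂ * Dq y₁

theorem sq_mul_one_add_Dq_mul_inv {y₁ : ℚ⟦X⟧} (y₂ : ℚ⟦X⟧) (h : constantCoeff y₁ ≠ 0) :
    y₁ ^ 2 * (1 + Dq (y₂ * y₁⁻¹)) = wronskian y₁ y₂ := by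
  have h_inv := PowerSeries.mul_inv_cancel y₁ h
  rw [wronskian, Dq_mul, Dq_inv]
  linear_combination (y₁ * Dq y₂ - y₂ * Dq y₁ * (y₁ * y₁⁻¹ + 1)) * h_inv

def wronskOp₂ (y : ℚ⟦X⟧) : ℚ⟦X⟧ :=
  (1 - 256 * X) * Dq (Dq y) - X * (384 * Dq y + 176 * y)

-- The exterior square of `pfOp`: it kills the `𝖣`-Wronskian of any two solutions of `pfOp`.
def wronskOp₃ (y : ℚ⟦X⟧) : ℚ⟦X⟧ :=
  (1 - 256 * X) * Dq (wronskOp₂ y) - X * (128 * wronskOp₂ y - 24 * (1 - 256 * X) * y)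

theorem eq_of_wronskOp₃_eq_zero {y z : ℚ⟦X⟧} (hy : wronskOp₃ y = 0) (hz : wronskOp₃ z = 0)
    (h₀ : constantCoeff y = constantCoeff z) : y = z := by
  have hW : IsUnit (1 - 256 * X : ℚ⟦X⟧) := by simp [isUnit_iff_constantCoeff]
  refine sub_eq_zero.mp (eq_zero_of_Dq_system (v₂ := Dq y - Dq z)
    (v₃ := wronskOp₂ y - wronskOp₂ z) (a := 176) (b := 384) (c := -24 * (1 - 256 * X)) (d := 128)
    hW (Dq_sub y z) ?_ ?_ (by simp [h₀]))
  · rw [Dq_sub, wronskOp₂, wronskOp₂]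
    ring
  · rw [wronskOp₃] at hy hz
    rw [Dq_sub]
    linear_combination hy - hz

theorem wronskOp₃_wronskian {y₁ y₂ : ℚ⟦X⟧} (h₁ : pfOp y₁ = 0)
    (h₂ : pfOp y₂ = X * (768 * Dq y₁ + 176 * y₁) - 3 * (1 - 256 * X) * Dq (Dq y₁)) :
    wronskOp₃ (wronskian y₁ y₂) = 0 := by
  unfold pfOp at h₁ h₂
  have hM : wronskOp₂ (wronskian y₁ y₂) = (1 - 256 * X) * (2 * Dq y₁ ^ 2
      + Dq y₁ * Dq (Dq y₂) - y₁ * Dq (Dq y₁) - Dq y₂ * Dq (Dq y₁)) := by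
    unfold wronskOp₂ wronskian
    simp only [Dq_mul, Dq_add, Dq_sub, pow_two]
    linear_combination y₁ * h₂ - y₂ * h₁
  rw [wronskOp₃, hM, wronskian]
  simp only [Dq_mul, Dq_add, Dq_sub, Dq_one, Dq_ofNat, Dq_X, pow_two]
  linear_combination (1 - 256 * X) * (Dq y₁ * h₂ - (y₁ + Dq y₂) * h₁)

theorem wronskOp₃_mul {g y : ℚ⟦X⟧} (hg : (1 - 256 * X) * Dq g = 128 * X * g) (hy : pfOp y = 0) :
    wronskOp₃ (g * y) = 0 := by
  have hg₂ : (1 - 256 * X) * Dq (Dq g) = 384 * X * Dq g + 128 * X * g := by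
    have h := congrArg Dq hg
    simp only [Dq_mul, Dq_sub, Dq_one, Dq_ofNat, Dq_X] at h
    linear_combination h
  have hW : (1 - 256 * X : ℚ⟦X⟧) ≠ 0 := fun h => by simpa using congrArg constantCoeff h
  have hM : wronskOp₂ (g * y) = g * ((1 - 256 * X) * Dq (Dq y) - X * (128 * Dq y + 48 * y)) := by
    refine mul_left_cancel₀ hW ?_
    unfold wronskOp₂
    simp only [Dq_mul, Dq_add]
    linear_combination ((1 - 256 * X) * y) * hg₂ + (2 * (1 - 256 * X) * Dq y) * hg
  rw [wronskOp₃, hM]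
  unfold pfOp at hy
  simp only [Dq_mul, Dq_add, Dq_sub, Dq_one, Dq_ofNat, Dq_X]
  linear_combination ((1 - 256 * X) * Dq (Dq y) - X * (128 * Dq y + 48 * y)) * hg
    + ((1 - 256 * X) * g) * hy

end LocalP3

open LocalP3

theorem stmt10 : (1 - 256 * PowerSeries.X) * C₁ ^ 2 * C₂ ^ 2 = 1 := by
  have hg := one_sub_mul_Dq_centralBinomSeries 64
  have hg_sq := one_sub_mul_centralBinomSeries_sq 64
  rw [map_ofNat] at hg hg_sq
  have hA : constantCoeff A ≠ 0 := by simp [constantCoeff_A]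
  have hwronskian : wronskian A u = centralBinomSeries 64 * A :=
    eq_of_wronskOp₃_eq_zero (wronskOp₃_wronskian pfOp_A pfOp_u)
      (wronskOp₃_mul (by linear_combination hg) pfOp_A)
      (by simp [wronskian, centralBinomSeries, constantCoeff_A])
  have hC₂ : A * C₂ = centralBinomSeries 64 := by
    refine mul_left_cancel₀ (a := A) (fun h => hA (by rw [h, map_zero])) ?_
    rw [C₂_eq]
    linear_combination sq_mul_one_add_Dq_mul_inv u hA + hwronskian
  rw [C₁_eq_A]
  linear_combination hg_sq + (1 - 256 * X) * (A * C₂ + centralBinomSeries 64) * hC₂
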